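/- Let G and H be graphs. If Breaker has a winning strategy in the Maker-Breaker game MB(G,H), then the edge set of G can be partitioned into two classes neither of which contains the edge set of a copy of H (strategy stealing: Maker can play arbitrarily at turn 0 and at limit turns and otherwise mimic Breaker's winning strategy, producing a play in which neither player's graph contains a copy of H). -/

import Mathlib

open Cardinal

universe u v

/-- A strategy in a transfinite positional game with moves of type `α`:
given the current turn (an ordinal) and the history of all moves made at
earlier turns, it produces a move. -/
def MBStrategy (α : Type u) : Type (u + 1) :=
  ∀ γ : Ordinal.{u}, (∀ β : Ordinal.{u}, β < γ → α) → α

/-- A completed play of a transfinite positional game on the board `board`: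
an ordinal-indexed sequence of moves, each an element of the board that was not
claimed at any earlier turn, which goes on until every element of the board has
been claimed. -/
structure MBPlay {α : Type u} (board : Set α) : Type (u + 1) where
  len : Ordinal.{u}
  move : ∀ γ : Ordinal.{u}, γ < len → α
  move_mem : ∀ γ h, move γ h ∈ board
  move_inj : ∀ γ₁ h₁ γ₂ h₂, move γ₁ h₁ = move γ₂ h₂ → γ₁ = γ₂
  complete : ∀ e ∈ board, ∃ γ h, move γ h = e

namespace MBPlay

variable {α : Type u} {board : Set α}

/-- The set of board elements claimed at the turns satisfying `turns`. -/
def claimed (p : MBPlay board) (turns : Ordinal.{u} → Prop) : Set α :=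
  {e | ∃ γ h, turns γ ∧ p.move γ h = e}

/-- The play is consistent with the player moving at the turns satisfying
`turns` using the strategy `σ`. -/
def Follows (p : MBPlay board) (turns : Ordinal.{u} → Prop) (σ : MBStrategy α) : Prop :=
  ∀ γ h, turns γ → p.move γ h = σ γ (fun β hβ => p.move β (hβ.trans h))

end MBPlay

/-- In the Maker–Breaker game the moves alternate with Maker moving first: the
turn `γ` belongs to Maker iff `γ % 2 = 0`.  In particular turn `0` and all
limit turns belong to Maker, and Breaker answers Maker's preceding move. -/
def makerTurn (γ : Ordinal.{u}) : Prop := γ % 2 = 0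

/-- The turns on which Breaker moves in the Maker–Breaker game. -/
def breakerTurn (γ : Ordinal.{u}) : Prop := γ % 2 = 1

/-- A strategy is legal for the player moving at the turns satisfying `turns`
if at every position (arising at such a turn) in which some element of the
board is still unclaimed, it produces an unclaimed element of the board. -/
def MBStrategy.IsLegal {α : Type u} (σ : MBStrategy α) (board : Set α)
    (turns : Ordinal.{u} → Prop) : Prop :=
  ∀ (γ : Ordinal.{u}) (hist : ∀ β : Ordinal.{u}, β < γ → α), turns γ →
    (∀ β h, hist β h ∈ board) →
    (∀ β₁ h₁ β₂ h₂, hist β₁ h₁ = hist β₂ h₂ → β₁ = β₂) →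
    (∃ e ∈ board, ∀ β h, hist β h ≠ e) →
    σ γ hist ∈ board ∧ ∀ β h, hist β h ≠ σ γ hist

/-- `G` contains a copy of `H`, i.e. a subgraph isomorphic to `H`; equivalently
there is an injective graph homomorphism from `H` into `G`. -/
def ContainsCopy {V : Type u} {W : Type v} (G : SimpleGraph V) (H : SimpleGraph W) : Prop :=
  ∃ f : H →g G, Function.Injective f

/-- Maker has a winning strategy in the Maker–Breaker game `MB(G, H)`:
playing at the even turns (including turn `0` and all limit turns) of a
transfinite play on the edge set of `G`, she can ensure that whatever Breaker
does at the odd turns, at the end of the play the graph formed by her claimed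
edges contains a copy of `H`. -/
def MakerWins {V : Type u} {W : Type v} (G : SimpleGraph V) (H : SimpleGraph W) : Prop :=
  ∃ σ : MBStrategy (Sym2 V), σ.IsLegal G.edgeSet makerTurn ∧
    ∀ p : MBPlay G.edgeSet, p.Follows makerTurn σ →
      ContainsCopy (SimpleGraph.fromEdgeSet (p.claimed makerTurn)) H

/-- Breaker has a winning strategy in the Maker–Breaker game `MB(G, H)`:
playing at the odd turns of a transfinite play on the edge set of `G`, he can
ensure that at the end of the play the graph formed by Maker's claimed edges
does not contain a copy of `H`. -/
def BreakerWins {V : Type u} {W : Type v} (G : SimpleGraph V) (H : SimpleGraph W) : Prop :=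
  ∃ σ : MBStrategy (Sym2 V), σ.IsLegal G.edgeSet breakerTurn ∧
    ∀ p : MBPlay G.edgeSet, p.Follows breakerTurn σ →
      ¬ ContainsCopy (SimpleGraph.fromEdgeSet (p.claimed makerTurn)) H


/-!
Strategy stealing. Let Breaker's winning strategy `σ` answer every Breaker move of a real play.
Alongside it Maker imagines a second play in which Breaker also uses `σ` while Maker copies each
real Breaker move one turn earlier; at a successor turn `δ + 1` of the real play Maker answers
with `σ`'s imagined move at turn `δ` (and with any legal move when that edge is taken, at turn `0`
and at limit turns). By induction every imagined move has been made in the real play by the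
following turn, so the real Breaker move at turn `δ + 1` is the imagined Maker move at turn `δ`.
Both plays follow `σ`, so neither the real Maker's edges nor the imagined Maker's edges, which
contain the real Breaker's edges, contain a copy of `H`.
-/

namespace Ordinal

theorem mod_two_eq_zero_or_one (γ : Ordinal) : γ % 2 = 0 ∨ γ % 2 = 1 :=
  Order.le_one_iff.1 <| Order.lt_succ_iff.1 <| by
    simpa [← one_add_one_eq_two] using mod_lt γ two_ne_zero

theorem add_one_mod_two_of_mod_two_eq_one {δ : Ordinal} (h : δ % 2 = 1) : (δ + 1) % 2 = 0 := by
  rw [← div_add_mod δ 2, h, add_assoc, one_add_one_eq_two, mul_add_mod_self, mod_self]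

theorem exists_eq_add_one_of_mod_two_eq_one {γ : Ordinal} (h : γ % 2 = 1) :
    ∃ δ, γ = δ + 1 ∧ δ % 2 = 0 :=
  ⟨2 * (γ / 2), by rw [← h, div_add_mod], by simp⟩

end Ordinal

namespace MBStrategy

variable {α : Type u} (board : Set α)

def Unclaimed {γ : Ordinal.{u}} (hist : ∀ β : Ordinal.{u}, β < γ → α) (e : α) : Prop :=
  e ∈ board ∧ ∀ β h, hist β h ≠ e

def Unexhausted (f : Ordinal.{u} → α) (γ : Ordinal.{u}) : Prop :=
  ∃ e, Unclaimed board (fun β (_ : β < γ) => f β) e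

variable {board}

theorem Unexhausted.mono {f : Ordinal.{u} → α} {β γ : Ordinal.{u}} (hβγ : β ≤ γ)
    (h : Unexhausted board f γ) : Unexhausted board f β :=
  let ⟨e, he, hfe⟩ := h
  ⟨e, he, fun β' h' => hfe β' (h'.trans_le hβγ)⟩

def run (σ : MBStrategy α) : Ordinal.{u} → α :=
  Ordinal.lt_wf.fix σ

theorem run_eq (σ : MBStrategy α) (γ : Ordinal.{u}) :
    σ.run γ = σ γ fun β _ => σ.run β :=
  Ordinal.lt_wf.fix_eq _ _

theorem run_congr {σ τ : MBStrategy α} {γ : Ordinal.{u}} (h : ∀ β ≤ γ, σ β = τ β) :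
    σ.run γ = τ.run γ := by
  induction γ using WellFoundedLT.induction with
  | _ γ ih =>
    rw [run_eq, run_eq, h γ le_rfl]
    congr 1
    funext β hβ
    exact ih β hβ fun β' hβ' => h β' (hβ'.trans hβ.le)

open Classical in
noncomputable def combine (turns : Ordinal.{u} → Prop) (σ τ : MBStrategy α) : MBStrategy α :=
  fun γ hist => if turns γ then σ γ hist else τ γ hist

theorem combine_of_turns {turns : Ordinal.{u} → Prop} {γ : Ordinal.{u}} (h : turns γ)
    (σ τ : MBStrategy α) : combine turns σ τ γ = σ γ := by
  funext hist; exact if_pos h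

theorem combine_of_not_turns {turns : Ordinal.{u} → Prop} {γ : Ordinal.{u}} (h : ¬turns γ)
    (σ τ : MBStrategy α) : combine turns σ τ γ = τ γ := by
  funext hist; exact if_neg h

variable (board) in
noncomputable def legalize (σ : MBStrategy α) : MBStrategy α := fun γ hist =>
  open Classical in
  if Unclaimed board hist (σ γ hist) then σ γ hist
  else if h : ∃ e, Unclaimed board hist e then h.choose else σ γ hist

theorem legalize_of_unclaimed {σ : MBStrategy α} {γ : Ordinal.{u}}
    {hist : ∀ β : Ordinal.{u}, β < γ → α} (h : Unclaimed board hist (σ γ hist)) :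
    σ.legalize board γ hist = σ γ hist :=
  if_pos h

theorem unclaimed_legalize (σ : MBStrategy α) {γ : Ordinal.{u}}
    {hist : ∀ β : Ordinal.{u}, β < γ → α} (h : ∃ e, Unclaimed board hist e) :
    Unclaimed board hist (σ.legalize board γ hist) := by
  unfold legalize
  split_ifs with hσ
  · exact hσ
  · exact h.choose_spec

theorem IsLegal.combine_legalize {turns : Ordinal.{u} → Prop} {σ : MBStrategy α}
    (hσ : σ.IsLegal board turns) (τ : MBStrategy α) :
    (combine turns σ (τ.legalize board)).IsLegal board fun _ => True := by
  intro γ hist _ hmem hinj hfree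
  by_cases hγ : turns γ
  · rw [combine_of_turns hγ]
    exact hσ γ hist hγ hmem hinj hfree
  · rw [combine_of_not_turns hγ]
    exact unclaimed_legalize τ hfree

section Play

variable {σ : MBStrategy α} (hσ : σ.IsLegal board fun _ => True)
include hσ

theorem unclaimed_run {γ : Ordinal.{u}} (hγ : Unexhausted board σ.run γ) :
    Unclaimed board (fun β (_ : β < γ) => σ.run β) (σ.run γ) := by
  induction γ using WellFoundedLT.induction with
  | _ γ ih =>
    have hprev : ∀ β < γ, Unclaimed board (fun β' (_ : β' < β) => σ.run β') (σ.run β) :=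
      fun β hβ => ih β hβ (hγ.mono hβ.le)
    rw [run_eq]
    refine hσ γ _ trivial (fun β hβ => (hprev β hβ).1) (fun β₁ h₁ β₂ h₂ heq => ?_) hγ
    rcases lt_trichotomy β₁ β₂ with hlt | rfl | hgt
    · exact absurd heq ((hprev β₂ h₂).2 β₁ hlt)
    · rfl
    · exact absurd heq.symm ((hprev β₁ h₁).2 β₂ hgt)

theorem eq_of_run_eq {β γ : Ordinal.{u}} (hβ : Unexhausted board σ.run β)
    (hγ : Unexhausted board σ.run γ) (heq : σ.run β = σ.run γ) : β = γ := by
  by_contra hne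
  rcases lt_or_gt_of_ne hne with hlt | hgt
  · exact (unclaimed_run hσ hγ).2 β hlt heq
  · exact (unclaimed_run hσ hβ).2 γ hgt heq.symm

theorem exists_not_unexhausted_run : ∃ γ, ¬Unexhausted board σ.run γ := by
  by_contra! h
  exact not_injective_of_ordinal σ.run fun β γ => eq_of_run_eq hσ (h β) (h γ)

theorem unexhausted_run_iff_lt {γ : Ordinal.{u}} :
    Unexhausted board σ.run γ ↔ γ < sInf {γ | ¬Unexhausted board σ.run γ} := by
  refine ⟨fun hγ => lt_of_not_ge fun hle => ?_, fun hlt => not_not.1 (notMem_of_lt_csInf' hlt)⟩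
  exact csInf_mem (exists_not_unexhausted_run hσ) (hγ.mono hle)

noncomputable def play : MBPlay board where
  len := sInf {γ | ¬Unexhausted board σ.run γ}
  move γ _ := σ.run γ
  move_mem γ h := (unclaimed_run hσ ((unexhausted_run_iff_lt hσ).2 h)).1
  move_inj β hβ γ hγ :=
    eq_of_run_eq hσ ((unexhausted_run_iff_lt hσ).2 hβ) ((unexhausted_run_iff_lt hσ).2 hγ)
  complete e he := by
    by_contra! h
    exact csInf_mem (exists_not_unexhausted_run hσ) ⟨e, he, h⟩

theorem lt_play_len_iff {γ : Ordinal.{u}} : γ < (play hσ).len ↔ Unexhausted board σ.run γ :=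
  (unexhausted_run_iff_lt hσ).symm

theorem play_move {γ : Ordinal.{u}} (h : γ < (play hσ).len) : (play hσ).move γ h = σ.run γ :=
  rfl

end Play

theorem play_combine_follows {turns : Ordinal.{u} → Prop} {σ τ : MBStrategy α}
    (h : (combine turns σ τ).IsLegal board fun _ => True) : (play h).Follows turns σ := by
  intro γ _ hγ
  rw [play_move, run_eq, combine_of_turns hγ]
  rfl

section Stealing

variable (board) (σ : MBStrategy α)

def copyAhead (f : Ordinal.{u} → α) : MBStrategy α := fun δ _ => f (δ + 1)

noncomputable def imagined (f : Ordinal.{u} → α) : MBStrategy α :=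
  combine breakerTurn σ ((copyAhead f).legalize board)

/-- The value `σ γ hist` padding the history is junk: at successor turns it is never read
(`stolen_add_one`), and at limit turns, where `Ordinal.pred γ = γ`, any legal move will do. -/
noncomputable def stolen : MBStrategy α := fun γ hist =>
  σ (Ordinal.pred γ) fun β _ =>
    (imagined board σ fun ξ => if h : ξ < γ then hist ξ h else σ γ hist).run β

noncomputable def stealing : MBStrategy α :=
  combine breakerTurn σ ((stolen board σ).legalize board)

theorem imagined_of_breakerTurn (f : Ordinal.{u} → α) {δ : Ordinal.{u}} (h : breakerTurn δ) :
    imagined board σ f δ = σ δ :=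
  combine_of_turns h _ _

theorem imagined_of_not_breakerTurn (f : Ordinal.{u} → α) {δ : Ordinal.{u}}
    (h : ¬breakerTurn δ) : imagined board σ f δ = (copyAhead f).legalize board δ :=
  combine_of_not_turns h _ _

theorem stealing_of_not_breakerTurn {γ : Ordinal.{u}} (h : ¬breakerTurn γ) :
    stealing board σ γ = (stolen board σ).legalize board γ :=
  combine_of_not_turns h _ _

theorem imagined_congr {f g : Ordinal.{u} → α} {β : Ordinal.{u}} (h : f (β + 1) = g (β + 1)) :
    imagined board σ f β = imagined board σ g β := by
  have hcopy : copyAhead f β = copyAhead g β := funext fun _ => h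
  unfold imagined combine legalize
  rw [hcopy]

theorem stolen_add_one (f : Ordinal.{u} → α) (δ : Ordinal.{u}) :
    stolen board σ (δ + 1) (fun β _ => f β) = σ δ fun β _ => (imagined board σ f).run β := by
  unfold stolen
  generalize hpred : Ordinal.pred (δ + 1) = p
  rw [Ordinal.pred_add_one] at hpred
  subst hpred
  congr 1
  funext β hβ
  refine run_congr fun β' hβ' => imagined_congr board σ (dif_pos ?_)
  exact Order.lt_add_one_iff.2 (Order.add_one_le_of_lt (hβ'.trans_lt hβ))

local notation "realRun" => run (stealing board σ)
local notation "imaginedRun" => run (imagined board σ realRun)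

variable {board σ}

theorem image_imaginedRun_Iio_subset {δ : Ordinal.{u}}
    (h : ∀ β < δ, Unexhausted board realRun (β + 1) → imaginedRun β ∈ realRun '' Set.Iic (β + 1))
    (hδ : Unexhausted board realRun (δ + 1)) :
    imaginedRun '' Set.Iio δ ⊆ realRun '' Set.Iio (δ + 1) := by
  rintro _ ⟨β, hβ, rfl⟩
  have hβδ : β + 1 < δ + 1 := Order.lt_add_one_iff.2 (Order.add_one_le_of_lt hβ)
  obtain ⟨τ, hτ, heq⟩ := h β hβ (hδ.mono hβδ.le)
  exact ⟨τ, lt_of_le_of_lt hτ hβδ, heq⟩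

theorem unexhausted_imaginedRun {δ : Ordinal.{u}}
    (hsub : imaginedRun '' Set.Iio δ ⊆ realRun '' Set.Iio (δ + 1))
    (hδ : Unexhausted board realRun (δ + 1)) : Unexhausted board imaginedRun δ := by
  obtain ⟨e, he, hfree⟩ := hδ
  refine ⟨e, he, fun β hβ heq => ?_⟩
  obtain ⟨τ, hτ, hτβ⟩ := hsub ⟨β, hβ, rfl⟩
  exact hfree τ hτ (hτβ.trans heq)

variable (hσ : σ.IsLegal board breakerTurn)
include hσ

theorem isLegal_stealing : (stealing board σ).IsLegal board fun _ => True :=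
  hσ.combine_legalize _

theorem isLegal_imagined (f : Ordinal.{u} → α) :
    (imagined board σ f).IsLegal board fun _ => True :=
  hσ.combine_legalize _

theorem imaginedRun_eq_of_mod_two_eq_zero {δ : Ordinal.{u}}
    (hsub : imaginedRun '' Set.Iio δ ⊆ realRun '' Set.Iio (δ + 1))
    (hδ : Unexhausted board realRun (δ + 1)) (heven : δ % 2 = 0) :
    imaginedRun δ = realRun (δ + 1) := by
  have hreal := unclaimed_run (isLegal_stealing hσ) hδ
  rw [run_eq, imagined_of_not_breakerTurn _ _ _ (by simp [breakerTurn, heven])]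
  refine legalize_of_unclaimed ⟨hreal.1, fun β hβ heq => ?_⟩
  obtain ⟨τ, hτ, hτβ⟩ := hsub ⟨β, hβ, rfl⟩
  exact hreal.2 τ hτ (hτβ.trans heq)

theorem imaginedRun_mem_image_Iic (δ : Ordinal.{u}) (hδ : Unexhausted board realRun (δ + 1)) :
    imaginedRun δ ∈ realRun '' Set.Iic (δ + 1) := by
  induction δ using WellFoundedLT.induction with
  | _ δ ih =>
  have hsub := image_imaginedRun_Iio_subset ih hδ
  rcases Ordinal.mod_two_eq_zero_or_one δ with heven | hodd
  · exact ⟨δ + 1, Set.self_mem_Iic, (imaginedRun_eq_of_mod_two_eq_zero hσ hsub hδ heven).symm⟩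
  by_cases hprev : imaginedRun δ ∈ realRun '' Set.Iio (δ + 1)
  · exact Set.image_mono Set.Iio_subset_Iic_self hprev
  have himagined : Unclaimed board (fun β (_ : β < δ + 1) => realRun β) (imaginedRun δ) :=
    ⟨(unclaimed_run (isLegal_imagined hσ _) (unexhausted_imaginedRun hsub hδ)).1,
      fun β hβ heq => hprev ⟨β, hβ, heq⟩⟩
  have hstolen : stolen board σ (δ + 1) (fun β _ => realRun β) = imaginedRun δ := by
    rw [stolen_add_one, run_eq (imagined board σ _), imagined_of_breakerTurn _ _ _ hodd]
  refine ⟨δ + 1, Set.self_mem_Iic, ?_⟩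
  rw [run_eq, stealing_of_not_breakerTurn _ _ (by simp [breakerTurn,
    Ordinal.add_one_mod_two_of_mod_two_eq_one hodd]), legalize_of_unclaimed (hstolen ▸ himagined),
    hstolen]

theorem claimed_breakerTurn_play_stealing_subset :
    (play (isLegal_stealing hσ)).claimed breakerTurn ⊆
      (play (isLegal_imagined hσ realRun)).claimed makerTurn := by
  rintro e ⟨γ, hγ, hodd, rfl⟩
  obtain ⟨δ, rfl, heven⟩ := Ordinal.exists_eq_add_one_of_mod_two_eq_one hodd
  have hδ := (lt_play_len_iff _).1 hγ
  have hsub := image_imaginedRun_Iio_subset (fun β _ => imaginedRun_mem_image_Iic hσ β) hδ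
  exact ⟨δ, (lt_play_len_iff _).2 (unexhausted_imaginedRun hsub hδ), heven,
    imaginedRun_eq_of_mod_two_eq_zero hσ hsub hδ heven⟩

theorem IsLegal.exists_plays_claimed_breakerTurn_subset :
    ∃ P Q : MBPlay board, P.Follows breakerTurn σ ∧ Q.Follows breakerTurn σ ∧
      P.claimed breakerTurn ⊆ Q.claimed makerTurn :=
  ⟨_, _, play_combine_follows (isLegal_stealing hσ), play_combine_follows (isLegal_imagined hσ _),
    claimed_breakerTurn_play_stealing_subset hσ⟩

end Stealing

end MBStrategy

namespace MBPlay

variable {α : Type u} {board : Set α} (p : MBPlay board)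

theorem claimed_makerTurn_union_claimed_breakerTurn :
    p.claimed makerTurn ∪ p.claimed breakerTurn = board := by
  refine Set.Subset.antisymm ?_ fun e he => ?_
  · rintro _ (⟨γ, h, -, rfl⟩ | ⟨γ, h, -, rfl⟩) <;> exact p.move_mem γ h
  · obtain ⟨γ, h, rfl⟩ := p.complete e he
    rcases Ordinal.mod_two_eq_zero_or_one γ with hγ | hγ
    · exact Or.inl ⟨γ, h, hγ, rfl⟩
    · exact Or.inr ⟨γ, h, hγ, rfl⟩

theorem disjoint_claimed_makerTurn_claimed_breakerTurn :
    Disjoint (p.claimed makerTurn) (p.claimed breakerTurn) := by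
  rw [Set.disjoint_left]
  rintro _ ⟨γ₁, h₁, hmaker, rfl⟩ ⟨γ₂, h₂, hbreaker, heq⟩
  cases p.move_inj γ₂ h₂ γ₁ h₁ heq
  exact zero_ne_one ((hmaker : γ₁ % 2 = 0).symm.trans hbreaker)

end MBPlay

theorem ContainsCopy.mono {V : Type u} {W : Type v} {G G' : SimpleGraph V} {H : SimpleGraph W}
    (hle : G ≤ G') : ContainsCopy G H → ContainsCopy G' H :=
  fun ⟨f, hf⟩ => ⟨(SimpleGraph.Hom.ofLE hle).comp f, hf⟩

/-- (Strategy stealing.)  If Breaker has a winning strategy in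
the Maker–Breaker game `MB(G, H)`, then the edge set of `G` can be partitioned
into two classes neither of which contains the edge set of a copy of `H`. -/
theorem edge_partition_of_breakerWins {V : Type u} {W : Type v}
    (G : SimpleGraph V) (H : SimpleGraph W) (hB : BreakerWins G H) :
    ∃ M B : Set (Sym2 V), M ∪ B = G.edgeSet ∧ Disjoint M B ∧
      ¬ ContainsCopy (SimpleGraph.fromEdgeSet M) H ∧
      ¬ ContainsCopy (SimpleGraph.fromEdgeSet B) H := by
  obtain ⟨σ, hσ, hwins⟩ := hB
  obtain ⟨P, Q, hP, hQ, hPQ⟩ := hσ.exists_plays_claimed_breakerTurn_subset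
  exact ⟨P.claimed makerTurn, P.claimed breakerTurn,
    P.claimed_makerTurn_union_claimed_breakerTurn,
    P.disjoint_claimed_makerTurn_claimed_breakerTurn, hwins P hP,
    fun hcopy => hwins Q hQ (hcopy.mono (SimpleGraph.fromEdgeSet_mono hPQ))⟩
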